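/- Let the system F_j(x,u(x),Du_j(x),D²u_j(x)) = 0, j = 1,…,m₁+m₂, be degenerate elliptic and balanced quasi-monotone. If (u₁,u₂) and (v₁,v₂) are sub-super solutions in Ω, then the function (w₁,w₂) defined componentwise by w₁(x) = max(u₁(x),v₁(x)) and w₂(x) = min(u₂(x),v₂(x)) is also a sub-super solution in Ω. -/

import Mathlib

open Filter Topology Matrix Bornology

noncomputable section

abbrev En (n : ℕ) := EuclideanSpace ℝ (Fin n)

/-- n×n real matrices (the symmetric ones model 𝒮ⁿ). -/
abbrev Symn (n : ℕ) := Matrix (Fin n) (Fin n) ℝ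

/-- Loewner order: `X ≤ Y` iff `Y - X` is positive semidefinite. -/
def LoewnerLE {ι : Type*} [Fintype ι] (X Y : Matrix ι ι ℝ) : Prop := (Y - X).PosSemidef

/-- Upper semicontinuous envelope relative to Ω: f*(x) = limsup_{Ω ∋ y → x} f(y). -/
def uEnv {n : ℕ} (Ω : Set (En n)) (f : En n → ℝ) (x : En n) : ℝ := limsup f (𝓝[Ω] x)

/-- Lower semicontinuous envelope relative to Ω: f_*(x) = liminf_{Ω ∋ y → x} f(y). -/
def lEnv {n : ℕ} (Ω : Set (En n)) (f : En n → ℝ) (x : En n) : ℝ := liminf f (𝓝[Ω] x)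

/-- φ touches f from above at x (within Ω). -/
def TouchAbove {n : ℕ} (Ω : Set (En n)) (φ f : En n → ℝ) (x : En n) : Prop :=
  φ x = f x ∧ ∃ N : Set (En n), IsOpen N ∧ x ∈ N ∧ ∀ y ∈ (N ∩ Ω) \ {x}, f y < φ y

/-- φ touches f from below at x (within Ω). -/
def TouchBelow {n : ℕ} (Ω : Set (En n)) (φ f : En n → ℝ) (x : En n) : Prop :=
  φ x = f x ∧ ∃ N : Set (En n), IsOpen N ∧ x ∈ N ∧ ∀ y ∈ (N ∩ Ω) \ {x}, φ y < f y

/-- Hessian matrix D²φ(x) of a scalar function. -/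
def hess {n : ℕ} (φ : En n → ℝ) (x : En n) : Symn n :=
  Matrix.of fun i j =>
    iteratedFDeriv ℝ 2 φ x ![EuclideanSpace.single i 1, EuclideanSpace.single j 1]

/-- The type of the operators F_j(x, r, s, p, X). -/
abbrev Op (n m₁ m₂ : ℕ) :=
  En n → (Fin m₁ → ℝ) → (Fin m₂ → ℝ) → En n → Symn n → ℝ

/-- Continuity of an operator on Ω × ℝ^{m₁} × ℝ^{m₂} × ℝⁿ × 𝒮ⁿ. -/
def OpContinuousOn {n m₁ m₂ : ℕ} (Ω : Set (En n)) (F : Op n m₁ m₂) : Prop :=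
  ContinuousOn (fun q : En n × (Fin m₁ → ℝ) × (Fin m₂ → ℝ) × En n × Symn n =>
      F q.1 q.2.1 q.2.2.1 q.2.2.2.1 q.2.2.2.2)
    (Ω ×ˢ (Set.univ : Set ((Fin m₁ → ℝ) × (Fin m₂ → ℝ) × En n × Symn n)))

def DegElliptic {n m₁ m₂ : ℕ} (Ω : Set (En n)) (F : Op n m₁ m₂) : Prop :=
  ∀ x ∈ Ω, ∀ (r : Fin m₁ → ℝ) (s : Fin m₂ → ℝ) (p : En n) (X Y : Symn n),
    X.IsSymm → Y.IsSymm → LoewnerLE X Y → F x r s p Y ≤ F x r s p X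

def BalancedQM {n m₁ m₂ : ℕ} (Ω : Set (En n))
    (F1 : Fin m₁ → Op n m₁ m₂) (F2 : Fin m₂ → Op n m₁ m₂) : Prop :=
  (∀ j, ∀ x ∈ Ω, ∀ (r : Fin m₁ → ℝ) (s σ : Fin m₂ → ℝ) (p : En n) (X : Symn n), X.IsSymm →
      (∀ i, s i ≤ σ i) → F1 j x r s p X ≤ F1 j x r σ p X) ∧
  (∀ j, ∀ x ∈ Ω, ∀ (r ρ : Fin m₁ → ℝ) (s : Fin m₂ → ℝ) (p : En n) (X : Symn n), X.IsSymm →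
      (∀ i, r i ≤ ρ i) → r j = ρ j → F1 j x ρ s p X ≤ F1 j x r s p X) ∧
  (∀ j, ∀ x ∈ Ω, ∀ (r ρ : Fin m₁ → ℝ) (s : Fin m₂ → ℝ) (p : En n) (X : Symn n), X.IsSymm →
      (∀ i, r i ≤ ρ i) → F2 j x r s p X ≤ F2 j x ρ s p X) ∧
  (∀ j, ∀ x ∈ Ω, ∀ (r : Fin m₁ → ℝ) (s σ : Fin m₂ → ℝ) (p : En n) (X : Symn n), X.IsSymm →
      (∀ i, s i ≤ σ i) → s j = σ j → F2 j x r σ p X ≤ F2 j x r s p X)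

def BddOn {n m : ℕ} (Ω : Set (En n)) (u : En n → Fin m → ℝ) : Prop :=
  ∃ M : ℝ, ∀ x ∈ Ω, ∀ i, |u x i| ≤ M

def SuperSub {n m₁ m₂ : ℕ} (Ω : Set (En n))
    (F1 : Fin m₁ → Op n m₁ m₂) (F2 : Fin m₂ → Op n m₁ m₂)
    (u1 : En n → Fin m₁ → ℝ) (u2 : En n → Fin m₂ → ℝ) : Prop :=
  BddOn Ω u1 ∧ BddOn Ω u2 ∧
  (∀ j, ∀ x ∈ Ω, ∀ φ : En n → ℝ, ContDiff ℝ 2 φ →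
      TouchBelow Ω φ (lEnv Ω fun y => u1 y j) x →
      0 ≤ F1 j x (fun i => lEnv Ω (fun y => u1 y i) x) (fun i => uEnv Ω (fun y => u2 y i) x)
            (gradient φ x) (hess φ x)) ∧
  (∀ j, ∀ x ∈ Ω, ∀ φ : En n → ℝ, ContDiff ℝ 2 φ →
      TouchAbove Ω φ (uEnv Ω fun y => u2 y j) x →
      F2 j x (fun i => lEnv Ω (fun y => u1 y i) x) (fun i => uEnv Ω (fun y => u2 y i) x)
          (gradient φ x) (hess φ x) ≤ 0)

def SubSuper {n m₁ m₂ : ℕ} (Ω : Set (En n))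
    (F1 : Fin m₁ → Op n m₁ m₂) (F2 : Fin m₂ → Op n m₁ m₂)
    (u1 : En n → Fin m₁ → ℝ) (u2 : En n → Fin m₂ → ℝ) : Prop :=
  BddOn Ω u1 ∧ BddOn Ω u2 ∧
  (∀ j, ∀ x ∈ Ω, ∀ φ : En n → ℝ, ContDiff ℝ 2 φ →
      TouchAbove Ω φ (uEnv Ω fun y => u1 y j) x →
      F1 j x (fun i => uEnv Ω (fun y => u1 y i) x) (fun i => lEnv Ω (fun y => u2 y i) x)
          (gradient φ x) (hess φ x) ≤ 0) ∧
  (∀ j, ∀ x ∈ Ω, ∀ φ : En n → ℝ, ContDiff ℝ 2 φ →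
      TouchBelow Ω φ (lEnv Ω fun y => u2 y j) x →
      0 ≤ F2 j x (fun i => uEnv Ω (fun y => u1 y i) x) (fun i => lEnv Ω (fun y => u2 y i) x)
            (gradient φ x) (hess φ x))

/-!
At a point `x` where `φ` touches `max (u₁ⱼ, v₁ⱼ)*` from above, the upper envelope of a maximum is
the maximum of the upper envelopes, so one of `u₁ⱼ*`, `v₁ⱼ*` (say `u₁ⱼ*`) agrees with `w₁ⱼ*` at `x`;
since `u₁* ≤ w₁*` everywhere, `φ` touches `u₁ⱼ*` from above at `x` as well, and the subsolution
inequality for `(u₁, u₂)` applies. Passing from `(u₁*, u₂_*)` to `(w₁*, w₂_*)` raises only the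
components `i ≠ j` of the first argument and lowers the second, which by balanced
quasi-monotonicity can only decrease `F_j`. The supersolution components are symmetric.
-/

theorem limsup_max_of_isBoundedUnder_abs {α : Type*} {l : Filter α} [l.NeBot] {f g : α → ℝ}
    (hf : l.IsBoundedUnder (· ≤ ·) fun a => |f a|) (hg : l.IsBoundedUnder (· ≤ ·) fun a => |g a|) :
    limsup (fun a => max (f a) (g a)) l = max (limsup f l) (limsup g l) := by
  obtain ⟨hf_le, hf_ge⟩ := isBoundedUnder_le_abs.mp hf
  obtain ⟨hg_le, hg_ge⟩ := isBoundedUnder_le_abs.mp hg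
  exact limsup_max hf_ge.isCoboundedUnder_le hg_ge.isCoboundedUnder_le hf_le hg_le

theorem liminf_min_of_isBoundedUnder_abs {α : Type*} {l : Filter α} [l.NeBot] {f g : α → ℝ}
    (hf : l.IsBoundedUnder (· ≤ ·) fun a => |f a|) (hg : l.IsBoundedUnder (· ≤ ·) fun a => |g a|) :
    liminf (fun a => min (f a) (g a)) l = min (liminf f l) (liminf g l) := by
  obtain ⟨hf_le, hf_ge⟩ := isBoundedUnder_le_abs.mp hf
  obtain ⟨hg_le, hg_ge⟩ := isBoundedUnder_le_abs.mp hg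
  exact liminf_min hf_le.isCoboundedUnder_ge hg_le.isCoboundedUnder_ge hf_ge hg_ge

section Envelopes

variable {n m : ℕ} {Ω : Set (En n)} {u v : En n → Fin m → ℝ}

theorem BddOn.max (hu : BddOn Ω u) (hv : BddOn Ω v) :
    BddOn Ω fun x i => max (u x i) (v x i) := by
  obtain ⟨M, hM⟩ := hu
  obtain ⟨N, hN⟩ := hv
  exact ⟨Max.max M N, fun x hx i =>
    abs_max_le_max_abs_abs.trans (max_le_max (hM x hx i) (hN x hx i))⟩

theorem BddOn.min (hu : BddOn Ω u) (hv : BddOn Ω v) :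
    BddOn Ω fun x i => min (u x i) (v x i) := by
  obtain ⟨M, hM⟩ := hu
  obtain ⟨N, hN⟩ := hv
  exact ⟨Max.max M N, fun x hx i =>
    abs_min_le_max_abs_abs.trans (max_le_max (hM x hx i) (hN x hx i))⟩

theorem BddOn.isBoundedUnder_abs (hu : BddOn Ω u) (x : En n) (i : Fin m) :
    (𝓝[Ω] x).IsBoundedUnder (· ≤ ·) fun y => |u y i| := by
  obtain ⟨M, hM⟩ := hu
  exact isBoundedUnder_of_eventually_le (eventually_nhdsWithin_of_forall fun y hy => hM y hy i)

theorem uEnv_max (hu : BddOn Ω u) (hv : BddOn Ω v) {x : En n} (hx : x ∈ closure Ω) (i : Fin m) :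
    uEnv Ω (fun y => max (u y i) (v y i)) x
      = max (uEnv Ω (fun y => u y i) x) (uEnv Ω (fun y => v y i) x) :=
  have := mem_closure_iff_nhdsWithin_neBot.mp hx
  limsup_max_of_isBoundedUnder_abs (hu.isBoundedUnder_abs x i) (hv.isBoundedUnder_abs x i)

theorem lEnv_min (hu : BddOn Ω u) (hv : BddOn Ω v) {x : En n} (hx : x ∈ closure Ω) (i : Fin m) :
    lEnv Ω (fun y => min (u y i) (v y i)) x
      = min (lEnv Ω (fun y => u y i) x) (lEnv Ω (fun y => v y i) x) :=
  have := mem_closure_iff_nhdsWithin_neBot.mp hx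
  liminf_min_of_isBoundedUnder_abs (hu.isBoundedUnder_abs x i) (hv.isBoundedUnder_abs x i)

end Envelopes

section Touching

variable {n : ℕ} {Ω : Set (En n)} {φ f g : En n → ℝ} {x : En n}

theorem TouchAbove.of_le (h : TouchAbove Ω φ g x) (hfg : ∀ y ∈ Ω, f y ≤ g y) (hx : f x = g x) :
    TouchAbove Ω φ f x :=
  let ⟨hφx, N, hN, hxN, hlt⟩ := h
  ⟨hφx.trans hx.symm, N, hN, hxN, fun y hy => (hfg y hy.1.2).trans_lt (hlt y hy)⟩

theorem TouchBelow.of_le (h : TouchBelow Ω φ g x) (hgf : ∀ y ∈ Ω, g y ≤ f y) (hx : f x = g x) :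
    TouchBelow Ω φ f x :=
  let ⟨hφx, N, hN, hxN, hlt⟩ := h
  ⟨hφx.trans hx.symm, N, hN, hxN, fun y hy => (hlt y hy).trans_le (hgf y hy.1.2)⟩

end Touching

theorem hess_isSymm {n : ℕ} {φ : En n → ℝ} (hφ : ContDiff ℝ 2 φ) (x : En n) :
    (hess φ x).IsSymm := by
  have hsymm : IsSymmSndFDerivAt ℝ φ x :=
    hφ.contDiffAt.isSymmSndFDerivAt (by simp [minSmoothness_of_isRCLikeNormedField])
  ext i j
  simpa only [Matrix.transpose_apply, hess, Matrix.of_apply, iteratedFDeriv_two_apply,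
    Matrix.cons_val_zero, Matrix.cons_val_one, Matrix.head_cons] using hsymm _ _

section Dominated

variable {n m₁ m₂ : ℕ} {Ω : Set (En n)} {F1 : Fin m₁ → Op n m₁ m₂} {F2 : Fin m₂ → Op n m₁ m₂}
  {u1 w1 : En n → Fin m₁ → ℝ} {u2 w2 : En n → Fin m₂ → ℝ} {x : En n} {φ : En n → ℝ}

theorem SubSuper.subsolution_test_of_dominated (hu : SubSuper Ω F1 F2 u1 u2)
    (hQM : BalancedQM Ω F1 F2)
    (h1 : ∀ y ∈ Ω, ∀ i, uEnv Ω (fun z => u1 z i) y ≤ uEnv Ω (fun z => w1 z i) y)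
    (h2 : ∀ i, lEnv Ω (fun z => w2 z i) x ≤ lEnv Ω (fun z => u2 z i) x)
    {j : Fin m₁} (hj : uEnv Ω (fun z => u1 z j) x = uEnv Ω (fun z => w1 z j) x)
    (hx : x ∈ Ω) (hφ : ContDiff ℝ 2 φ) (ht : TouchAbove Ω φ (uEnv Ω fun z => w1 z j) x) :
    F1 j x (fun i => uEnv Ω (fun z => w1 z i) x) (fun i => lEnv Ω (fun z => w2 z i) x)
      (gradient φ x) (hess φ x) ≤ 0 := by
  obtain ⟨hs_mono, hr_anti, -, -⟩ := hQM
  have hX := hess_isSymm hφ x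
  calc _ ≤ F1 j x (fun i => uEnv Ω (fun z => u1 z i) x) (fun i => lEnv Ω (fun z => w2 z i) x)
          (gradient φ x) (hess φ x) := hr_anti j x hx _ _ _ _ _ hX (h1 x hx) hj
    _ ≤ F1 j x (fun i => uEnv Ω (fun z => u1 z i) x) (fun i => lEnv Ω (fun z => u2 z i) x)
          (gradient φ x) (hess φ x) := hs_mono j x hx _ _ _ _ _ hX h2
    _ ≤ 0 := hu.2.2.1 j x hx φ hφ (ht.of_le (fun y hy => h1 y hy j) hj)

theorem SubSuper.supersolution_test_of_dominated (hu : SubSuper Ω F1 F2 u1 u2)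
    (hQM : BalancedQM Ω F1 F2)
    (h1 : ∀ i, uEnv Ω (fun z => u1 z i) x ≤ uEnv Ω (fun z => w1 z i) x)
    (h2 : ∀ y ∈ Ω, ∀ i, lEnv Ω (fun z => w2 z i) y ≤ lEnv Ω (fun z => u2 z i) y)
    {j : Fin m₂} (hj : lEnv Ω (fun z => u2 z j) x = lEnv Ω (fun z => w2 z j) x)
    (hx : x ∈ Ω) (hφ : ContDiff ℝ 2 φ) (ht : TouchBelow Ω φ (lEnv Ω fun z => w2 z j) x) :
    0 ≤ F2 j x (fun i => uEnv Ω (fun z => w1 z i) x) (fun i => lEnv Ω (fun z => w2 z i) x)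
      (gradient φ x) (hess φ x) := by
  obtain ⟨-, -, hr_mono, hs_anti⟩ := hQM
  have hX := hess_isSymm hφ x
  calc 0 ≤ F2 j x (fun i => uEnv Ω (fun z => u1 z i) x) (fun i => lEnv Ω (fun z => u2 z i) x)
          (gradient φ x) (hess φ x) := hu.2.2.2 j x hx φ hφ (ht.of_le (fun y hy => h2 y hy j) hj)
    _ ≤ F2 j x (fun i => uEnv Ω (fun z => w1 z i) x) (fun i => lEnv Ω (fun z => u2 z i) x)
          (gradient φ x) (hess φ x) := hr_mono j x hx _ _ _ _ _ hX h1
    _ ≤ _ := hs_anti j x hx _ _ _ _ _ hX (h2 x hx) hj.symm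

end Dominated

theorem max_min_subSuper_general {n m₁ m₂ : ℕ}
    (Ω : Set (En n))
    (F1 : Fin m₁ → Op n m₁ m₂) (F2 : Fin m₂ → Op n m₁ m₂)
    (hQM : BalancedQM Ω F1 F2)
    (u1 v1 : En n → Fin m₁ → ℝ) (u2 v2 : En n → Fin m₂ → ℝ)
    (hu : SubSuper Ω F1 F2 u1 u2) (hv : SubSuper Ω F1 F2 v1 v2) :
    SubSuper Ω F1 F2 (fun x j => max (u1 x j) (v1 x j)) (fun x j => min (u2 x j) (v2 x j)) := by
  have hw1 := fun y (hy : y ∈ Ω) => uEnv_max hu.1 hv.1 (subset_closure hy)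
  have hw2 := fun y (hy : y ∈ Ω) => lEnv_min hu.2.1 hv.2.1 (subset_closure hy)
  refine ⟨hu.1.max hv.1, hu.2.1.min hv.2.1, fun j x hx φ hφ ht => ?_, fun j x hx φ hφ ht => ?_⟩
  · rcases le_total (uEnv Ω (fun y => v1 y j) x) (uEnv Ω (fun y => u1 y j) x) with hc | hc
    · exact hu.subsolution_test_of_dominated hQM
        (fun y hy i => (le_max_left _ _).trans_eq (hw1 y hy i).symm)
        (fun i => (hw2 x hx i).trans_le (min_le_left _ _))
        ((max_eq_left hc).symm.trans (hw1 x hx j).symm) hx hφ ht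
    · exact hv.subsolution_test_of_dominated hQM
        (fun y hy i => (le_max_right _ _).trans_eq (hw1 y hy i).symm)
        (fun i => (hw2 x hx i).trans_le (min_le_right _ _))
        ((max_eq_right hc).symm.trans (hw1 x hx j).symm) hx hφ ht
  · rcases le_total (lEnv Ω (fun y => u2 y j) x) (lEnv Ω (fun y => v2 y j) x) with hc | hc
    · exact hu.supersolution_test_of_dominated hQM
        (fun i => (le_max_left _ _).trans_eq (hw1 x hx i).symm)
        (fun y hy i => (hw2 y hy i).trans_le (min_le_left _ _))
        ((min_eq_left hc).symm.trans (hw2 x hx j).symm) hx hφ ht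
    · exact hv.supersolution_test_of_dominated hQM
        (fun i => (le_max_right _ _).trans_eq (hw1 x hx i).symm)
        (fun y hy i => (hw2 y hy i).trans_le (min_le_right _ _))
        ((min_eq_right hc).symm.trans (hw2 x hx j).symm) hx hφ ht

/-- the componentwise (max, min) of two sub-super solutions of a degenerate
elliptic, balanced quasi-monotone system is again a sub-super solution. -/
theorem max_min_subSuper {n m₁ m₂ : ℕ} (hm₁ : 1 ≤ m₁)
    (Ω : Set (En n)) (hΩo : IsOpen Ω) (hΩb : IsBounded Ω)
    (F1 : Fin m₁ → Op n m₁ m₂) (F2 : Fin m₂ → Op n m₁ m₂)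
    (hF1c : ∀ j, OpContinuousOn Ω (F1 j)) (hF2c : ∀ j, OpContinuousOn Ω (F2 j))
    (hF1e : ∀ j, DegElliptic Ω (F1 j)) (hF2e : ∀ j, DegElliptic Ω (F2 j))
    (hQM : BalancedQM Ω F1 F2)
    (u1 v1 : En n → Fin m₁ → ℝ) (u2 v2 : En n → Fin m₂ → ℝ)
    (hu : SubSuper Ω F1 F2 u1 u2) (hv : SubSuper Ω F1 F2 v1 v2) :
    SubSuper Ω F1 F2 (fun x j => max (u1 x j) (v1 x j)) (fun x j => min (u2 x j) (v2 x j)) :=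
  max_min_subSuper_general Ω F1 F2 hQM u1 v1 u2 v2 hu hv
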